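/- arXiv:1903.08216 — 2 statements merged into one kernel-verified Lean document; each statement's English description precedes it below -/
import Mathlib

section
/- Let φ: ℝ → ℝ be compactly supported, twice continuously differentiable, and satisfy Σ_{j∈ℤ} j^m φ(t − j) = t^m for all t ∈ ℝ and m = 0, 1, 2. Let g: ℝ → ℝ be three times differentiable with g, g', g'', g''' bounded on ℝ, and let K > 0. Then there exists C > 0 such that for all ε ∈ (0, 1], all t ∈ ℝ, and all δ ∈ ℝ with |δ| ≤ K ε, one has | ε^{-2} Σ_{j∈ℤ} g(εj) [ φ''((t + δ)/ε − j) − φ''(t/ε − j) ] | ≤ C ε. -/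
/-!
Differentiating the reproduction identities `∑ j^m φ(s - j) = s^m` twice (the sums are locally
finite) gives the moments `∑ j^m φ''(s - j) = 0, 0, 2` for `m = 0, 1, 2`. Hence `φ''` annihilates
the second-order Taylor polynomial of `g` at `x` except for its quadratic term, and the cubic
Taylor remainder gives `∑ g(εj) φ''(x/ε - j) = ε² g''(x) + O(ε³)` uniformly in `x`. Taking the
difference at `x = t + δ` and `x = t`, the main terms differ by `ε² (g''(t + δ) - g''(t)) = O(ε³)`
because `g''` is Lipschitz and `|δ| ≤ K ε`.
-/

open Finset

lemma abs_le_mul_pow_succ_of_hasDerivAt {f f' : ℝ → ℝ} {C : ℝ} {n : ℕ} (hf0 : f 0 = 0)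
    (hf : ∀ u, HasDerivAt f (f' u) u) (hbound : ∀ u, |f' u| ≤ C * |u| ^ n) (h : ℝ) :
    |f h| ≤ C * |h| ^ (n + 1) := by
  have hC : 0 ≤ C := by simpa using (abs_nonneg _).trans (hbound 1)
  have hmvt := Convex.norm_image_sub_le_of_norm_hasDerivWithin_le (s := Set.uIcc 0 h)
    (C := C * |h| ^ n)
    (fun u _ => (hf u).hasDerivWithinAt) (fun u hu => ?_) (convex_uIcc 0 h) Set.left_mem_uIcc
    Set.right_mem_uIcc
  · simpa [hf0, pow_succ, mul_assoc] using hmvt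
  · have hu' : |u| ≤ |h| := by simpa using Set.abs_sub_left_of_mem_uIcc hu
    calc ‖f' u‖ ≤ C * |u| ^ n := hbound u
      _ ≤ C * |h| ^ n := by gcongr

section Taylor

variable {g : ℝ → ℝ} {B : ℝ}

lemma abs_deriv_deriv_add_sub_le (hg3 : Differentiable ℝ (deriv (deriv g)))
    (hB : ∀ x, |deriv (deriv (deriv g)) x| ≤ B) (x h : ℝ) :
    |deriv (deriv g) (x + h) - deriv (deriv g) x| ≤ B * |h| := by
  simpa using abs_le_mul_pow_succ_of_hasDerivAt (n := 0) (by simp)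
    (fun u => ((hg3 (x + u)).hasDerivAt.comp_const_add x u).sub_const _)
    (fun u => by simpa using hB (x + u)) h

lemma abs_sub_taylor_two_le (hg1 : Differentiable ℝ g) (hg2 : Differentiable ℝ (deriv g))
    (hg3 : Differentiable ℝ (deriv (deriv g))) (hB : ∀ x, |deriv (deriv (deriv g)) x| ≤ B)
    (x h : ℝ) :
    |g (x + h) - (g x + deriv g x * h + deriv (deriv g) x * h ^ 2 / 2)| ≤ B * |h| ^ 3 := by
  have hrem1 : ∀ u, |deriv g (x + u) - deriv g x - deriv (deriv g) x * u| ≤ B * |u| ^ 2 :=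
    abs_le_mul_pow_succ_of_hasDerivAt (n := 1)
      (f' := fun u => deriv (deriv g) (x + u) - deriv (deriv g) x) (by simp)
      (fun u => by
        simpa using (((hg2 (x + u)).hasDerivAt.comp_const_add x u).sub_const _).fun_sub
          ((hasDerivAt_id u).const_mul (deriv (deriv g) x)))
      (fun u => by simpa using abs_deriv_deriv_add_sub_le hg3 hB x u)
  refine abs_le_mul_pow_succ_of_hasDerivAt (n := 2)
    (f := fun h => g (x + h) - (g x + deriv g x * h + deriv (deriv g) x * h ^ 2 / 2))
    (by simp) (fun u => ?_) hrem1 h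
  have hpoly := (((hasDerivAt_id' u).const_mul (deriv g x)).const_add (g x)).fun_add
    (((hasDerivAt_pow 2 u).const_mul (deriv (deriv g) x)).div_const 2)
  refine (((hg1 (x + u)).hasDerivAt.comp_const_add x u).fun_sub hpoly).congr_deriv ?_
  norm_num
  ring

end Taylor

noncomputable def intWindow (s R : ℝ) : Finset ℤ := Icc ⌈s - R⌉ ⌊s + R⌋

lemma mem_intWindow {s R : ℝ} {j : ℤ} : j ∈ intWindow s R ↔ |s - j| ≤ R := by
  rw [intWindow, mem_Icc, Int.ceil_le, Int.le_floor, abs_sub_le_iff]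
  constructor <;> rintro ⟨h₁, h₂⟩ <;> constructor <;> linarith

lemma card_intWindow_le (s : ℝ) {R : ℝ} (hR : 0 ≤ R) : (#(intWindow s R) : ℝ) ≤ 2 * R + 1 := by
  have hcard : (#(intWindow s R) : ℝ) = max ((⌊s + R⌋ : ℝ) + 1 - ⌈s - R⌉) 0 := by
    rw [intWindow, Int.card_Icc]
    exact_mod_cast Int.toNat_eq_max _
  rw [hcard]
  refine max_le ?_ (by linarith)
  linarith [Int.floor_le (s + R), Int.le_ceil (s - R)]

lemma abs_tsum_le_of_intWindow {F : ℤ → ℝ} {s R A : ℝ} (hR : 0 ≤ R)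
    (hF : ∀ j ∉ intWindow s R, F j = 0) (hA : ∀ j, |F j| ≤ A) :
    |∑' j, F j| ≤ (2 * R + 1) * A := by
  rw [tsum_eq_sum hF]
  calc |∑ j ∈ intWindow s R, F j| ≤ ∑ j ∈ intWindow s R, |F j| := abs_sum_le_sum_abs _ _
    _ ≤ #(intWindow s R) * A := by simpa using sum_le_card_nsmul _ _ _ fun j _ => hA j
    _ ≤ (2 * R + 1) * A := by
      gcongr
      · exact (abs_nonneg _).trans (hA 0)
      · exact card_intWindow_le s hR

section Shifts

variable {ψ : ℝ → ℝ} {L : ℝ}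

lemma summable_mul_shift (hψ : ∀ x, L < |x| → ψ x = 0) (c : ℤ → ℝ) (s : ℝ) :
    Summable fun j : ℤ => c j * ψ (s - j) :=
  summable_of_ne_finset_zero (s := intWindow s L) fun j hj => by
    rw [hψ _ (not_le.mp (mem_intWindow.not.mp hj)), mul_zero]

lemma tsum_mul_shift_eq_sum (hψ : ∀ x, L < |x| → ψ x = 0) (c : ℤ → ℝ) {s u : ℝ}
    (hu : |u - s| ≤ 1) :
    ∑' j : ℤ, c j * ψ (u - j) = ∑ j ∈ intWindow s (L + 1), c j * ψ (u - j) := by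
  refine tsum_eq_sum fun j hj => ?_
  have hj' : L + 1 < |s - j| := not_le.mp (mem_intWindow.not.mp hj)
  have : L < |u - j| := by
    have := abs_sub_le s u (j : ℝ)
    rw [abs_sub_comm s u] at this
    linarith
  rw [hψ _ this, mul_zero]

lemma deriv_eq_zero_of_lt_abs (hψ : ∀ x, L < |x| → ψ x = 0) (x : ℝ) (hx : L < |x|) :
    deriv ψ x = 0 := by
  have hloc : ψ =ᶠ[nhds x] 0 :=
    Filter.eventually_of_mem ((isOpen_lt continuous_const continuous_abs).mem_nhds hx) hψ
  simp [hloc.deriv_eq]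

lemma hasDerivAt_tsum_mul_shift (hd : Differentiable ℝ ψ) (hψ : ∀ x, L < |x| → ψ x = 0)
    (c : ℤ → ℝ) (s : ℝ) :
    HasDerivAt (fun u => ∑' j : ℤ, c j * ψ (u - j)) (∑' j : ℤ, c j * deriv ψ (s - j)) s := by
  have hsum : HasDerivAt (fun u => ∑ j ∈ intWindow s (L + 1), c j * ψ (u - j))
      (∑ j ∈ intWindow s (L + 1), c j * deriv ψ (s - j)) s :=
    HasDerivAt.fun_sum fun j _ => ((hd _).hasDerivAt.comp_sub_const s (j : ℝ)).const_mul (c j)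
  rw [tsum_mul_shift_eq_sum (deriv_eq_zero_of_lt_abs hψ) c (u := s) (s := s) (by simp)]
  refine hsum.congr_of_eventuallyEq ?_
  filter_upwards [Metric.closedBall_mem_nhds s one_pos] with u hu
  exact tsum_mul_shift_eq_sum hψ c (by simpa [Real.dist_eq] using hu)

lemma tsum_mul_deriv_deriv_shift (hd : Differentiable ℝ ψ) (hd' : Differentiable ℝ (deriv ψ))
    (hψ : ∀ x, L < |x| → ψ x = 0) (c : ℤ → ℝ) (s : ℝ) :
    ∑' j : ℤ, c j * deriv (deriv ψ) (s - j) =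
      deriv (deriv fun u => ∑' j : ℤ, c j * ψ (u - j)) s := by
  have h1 : deriv (fun u => ∑' j : ℤ, c j * ψ (u - j)) =
      fun u => ∑' j : ℤ, c j * deriv ψ (u - j) :=
    funext fun u => (hasDerivAt_tsum_mul_shift hd hψ c u).deriv
  rw [h1, (hasDerivAt_tsum_mul_shift hd' (deriv_eq_zero_of_lt_abs hψ) c s).deriv]

end Shifts

section Moments

variable {ψ : ℝ → ℝ} {L : ℝ}

lemma tsum_quadratic_mul_shift (hψ : ∀ x, L < |x| → ψ x = 0) {s : ℝ}
    (h0 : ∑' j : ℤ, ψ (s - j) = 0) (h1 : ∑' j : ℤ, (j : ℝ) * ψ (s - j) = 0)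
    (h2 : ∑' j : ℤ, (j : ℝ) ^ 2 * ψ (s - j) = 2) (a b c : ℝ) :
    ∑' j : ℤ, (a + b * (j - s) + c * (j - s) ^ 2) * ψ (s - j) = 2 * c := by
  have hexpand : ∀ j : ℤ, (a + b * (j - s) + c * (j - s) ^ 2) * ψ (s - j) =
      (a - b * s + c * s ^ 2) * (1 * ψ (s - j)) + (b - 2 * c * s) * ((j : ℝ) * ψ (s - j))
        + c * ((j : ℝ) ^ 2 * ψ (s - j)) := fun j => by ring
  have hsum := fun (w : ℤ → ℝ) (k : ℝ) => (summable_mul_shift hψ w s).mul_left k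
  simp_rw [hexpand]
  rw [Summable.tsum_add (by exact (hsum _ _).add (hsum _ _)) (hsum _ _),
    Summable.tsum_add (hsum _ _) (hsum _ _)]
  simp only [tsum_mul_left, one_mul, h0, h1, h2]
  ring

lemma abs_tsum_mul_shift_sub_le {g : ℝ → ℝ} {B M : ℝ} (hL : 0 ≤ L)
    (hψ : ∀ x, L < |x| → ψ x = 0) (hM : ∀ x, |ψ x| ≤ M)
    (h0 : ∀ s, ∑' j : ℤ, ψ (s - j) = 0) (h1 : ∀ s, ∑' j : ℤ, (j : ℝ) * ψ (s - j) = 0)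
    (h2 : ∀ s, ∑' j : ℤ, (j : ℝ) ^ 2 * ψ (s - j) = 2)
    (htaylor : ∀ x h, |g (x + h) - (g x + deriv g x * h + deriv (deriv g) x * h ^ 2 / 2)| ≤
      B * |h| ^ 3)
    {ε : ℝ} (hε : 0 < ε) (x : ℝ) :
    |∑' j : ℤ, g (ε * j) * ψ (x / ε - j) - ε ^ 2 * deriv (deriv g) x| ≤
      (2 * L + 1) * (B * L ^ 3 * M) * ε ^ 3 := by
  set s := x / ε
  have hs : ε * s = x := mul_div_cancel₀ x hε.ne'
  have hB : 0 ≤ B := by simpa using (abs_nonneg _).trans (htaylor 0 1)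
  have hM0 : 0 ≤ M := (abs_nonneg _).trans (hM 0)
  have hP := tsum_quadratic_mul_shift hψ (h0 s) (h1 s) (h2 s)
    (g x) (ε * deriv g x) (ε ^ 2 * deriv (deriv g) x / 2)
  rw [show ε ^ 2 * deriv (deriv g) x = 2 * (ε ^ 2 * deriv (deriv g) x / 2) by ring, ← hP,
    ← (summable_mul_shift hψ _ s).tsum_sub (summable_mul_shift hψ _ s), mul_assoc]
  refine abs_tsum_le_of_intWindow (s := s) hL (fun j hj => ?_) (fun j => ?_)
  · rw [hψ _ (not_le.mp (mem_intWindow.not.mp hj))]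
    ring
  rw [← sub_mul, abs_mul]
  by_cases hj : |s - j| ≤ L
  · have hrem : |g (ε * j) - (g x + ε * deriv g x * (j - s) +
        ε ^ 2 * deriv (deriv g) x / 2 * (j - s) ^ 2)| ≤ B * |ε * (j - s)| ^ 3 := by
      convert htaylor x (ε * (j - s)) using 3
      · rw [← hs]; ring_nf
      · ring
    have hstep : |ε * (j - s)| ≤ ε * L := by
      rw [abs_mul, abs_of_pos hε, abs_sub_comm]
      gcongr
    calc _ ≤ B * |ε * (j - s)| ^ 3 * M := by gcongr; exact hM _
      _ ≤ B * (ε * L) ^ 3 * M := by gcongr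
      _ = B * L ^ 3 * M * ε ^ 3 := by ring
  · rw [hψ _ (not_le.mp hj), abs_zero, mul_zero]
    positivity

end Moments

lemma abs_sub_div_sq_le_of_approx {S G : ℝ → ℝ} {C₁ B K ε δ : ℝ} (hε : 0 < ε)
    (hS : ∀ x, |S x - ε ^ 2 * G x| ≤ C₁ * ε ^ 3) (hG : ∀ x h, |G (x + h) - G x| ≤ B * |h|)
    (hB : 0 ≤ B) (hδ : |δ| ≤ K * ε) (t : ℝ) :
    |(S (t + δ) - S t) / ε ^ 2| ≤ (2 * C₁ + B * |K|) * ε := by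
  have h₁ := abs_le.mp (hS (t + δ))
  have h₂ := abs_le.mp (hS t)
  have h₃ : |ε ^ 2 * (G (t + δ) - G t)| ≤ ε ^ 2 * (B * |K| * ε) := by
    rw [abs_mul, abs_of_pos (by positivity)]
    gcongr
    calc _ ≤ B * |δ| := hG t δ
      _ ≤ B * (|K| * ε) := by gcongr; exact hδ.trans (by gcongr; exact le_abs_self K)
      _ = B * |K| * ε := by ring
  rw [abs_div, abs_of_pos (pow_pos hε 2), div_le_iff₀ (by positivity), abs_le]
  have hε3 : 0 < ε ^ 3 := by positivity
  constructor <;> nlinarith [abs_le.mp h₃]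

theorem stmt5_general (φ : ℝ → ℝ)
    (hsupp : HasCompactSupport φ)
    (hsmooth : ContDiff ℝ 2 φ)
    (hA1 : ∀ m : ℕ, m ≤ 2 → ∀ t : ℝ,
      ∑' j : ℤ, (j : ℝ) ^ m * φ (t - (j : ℝ)) = t ^ m)
    (g : ℝ → ℝ)
    (hg1 : Differentiable ℝ g)
    (hg2 : Differentiable ℝ (deriv g))
    (hg3 : Differentiable ℝ (deriv (deriv g)))
    (B : ℝ)
    (hB : ∀ x : ℝ, |g x| ≤ B ∧ |deriv g x| ≤ B ∧ |deriv (deriv g) x| ≤ B ∧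
      |deriv (deriv (deriv g)) x| ≤ B)
    (K : ℝ) :
    ∃ C : ℝ, 0 < C ∧ ∀ ε : ℝ, ε ∈ Set.Ioc (0:ℝ) 1 → ∀ t δ : ℝ, |δ| ≤ K * ε →
      |(∑' j : ℤ, g (ε * j) *
          (deriv (deriv φ) ((t + δ) / ε - (j : ℝ)) - deriv (deriv φ) (t / ε - (j : ℝ)))) / ε ^ 2|
        ≤ C * ε := by
  have hφ' : ContDiff ℝ 1 (deriv φ) := hsmooth.deriv'
  have hB3 : ∀ x, |deriv (deriv (deriv g)) x| ≤ B := fun x => (hB x).2.2.2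
  obtain ⟨R, hR, hφR⟩ := hsupp.exists_pos_le_norm
  have hφ : ∀ x, R < |x| → φ x = 0 := fun x hx => hφR x hx.le
  have hφ'' := deriv_eq_zero_of_lt_abs (deriv_eq_zero_of_lt_abs hφ)
  obtain ⟨M, hM⟩ := (hφ'.continuous_deriv le_rfl).bounded_above_of_compact_support
    hsupp.deriv.deriv
  have hmoment : ∀ m ≤ 2, ∀ s : ℝ,
      ∑' j : ℤ, (j : ℝ) ^ m * deriv (deriv φ) (s - j) = deriv (deriv fun t => t ^ m) s :=
    fun m hm s => by
      rw [tsum_mul_deriv_deriv_shift (hsmooth.differentiable two_ne_zero)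
        (hφ'.differentiable one_ne_zero) hφ, funext (hA1 m hm)]
  have hsq : deriv (fun t : ℝ => t ^ 2) = fun t => 2 * t := by ext; simp
  have happrox := fun ε (hε : 0 < ε) => abs_tsum_mul_shift_sub_le hR.le hφ'' hM
    (by simpa using hmoment 0 (by norm_num)) (by simpa using hmoment 1 (by norm_num))
    (by simpa [hsq] using hmoment 2 le_rfl) (abs_sub_taylor_two_le hg1 hg2 hg3 hB3) hε
  set C₁ := (2 * R + 1) * (B * R ^ 3 * M)
  have hB0 : 0 ≤ B := (abs_nonneg _).trans (hB3 0)
  have hC₁ : 0 ≤ C₁ := by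
    have hM0 : 0 ≤ M := (abs_nonneg _).trans (hM 0)
    positivity
  refine ⟨2 * C₁ + B * |K| + 1, by positivity, ?_⟩
  rintro ε ⟨hε, -⟩ t δ hδ
  have hsplit := (summable_mul_shift hφ'' (fun j : ℤ => g (ε * j)) ((t + δ) / ε)).tsum_sub
    (summable_mul_shift hφ'' (fun j : ℤ => g (ε * j)) (t / ε))
  simp_rw [← mul_sub] at hsplit
  rw [hsplit]
  calc _ ≤ (2 * C₁ + B * |K|) * ε := abs_sub_div_sq_le_of_approx hε (happrox ε hε)
        (abs_deriv_deriv_add_sub_le hg3 hB3) hB0 hδ t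
    _ ≤ _ := mul_le_mul_of_nonneg_right (by linarith) hε.le

theorem stmt5 (φ : ℝ → ℝ)
    (hsupp : HasCompactSupport φ)
    (hsmooth : ContDiff ℝ 2 φ)
    (hA1 : ∀ m : ℕ, m ≤ 2 → ∀ t : ℝ,
      ∑' j : ℤ, (j : ℝ) ^ m * φ (t - (j : ℝ)) = t ^ m)
    (g : ℝ → ℝ)
    (hg1 : Differentiable ℝ g)
    (hg2 : Differentiable ℝ (deriv g))
    (hg3 : Differentiable ℝ (deriv (deriv g)))
    (B : ℝ)
    (hB : ∀ x : ℝ, |g x| ≤ B ∧ |deriv g x| ≤ B ∧ |deriv (deriv g) x| ≤ B ∧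
      |deriv (deriv (deriv g)) x| ≤ B)
    (K : ℝ) (hK : 0 < K) :
    ∃ C : ℝ, 0 < C ∧ ∀ ε : ℝ, ε ∈ Set.Ioc (0:ℝ) 1 → ∀ t δ : ℝ, |δ| ≤ K * ε →
      |(∑' j : ℤ, g (ε * j) *
          (deriv (deriv φ) ((t + δ) / ε - (j : ℝ)) - deriv (deriv φ) (t / ε - (j : ℝ)))) / ε ^ 2|
        ≤ C * ε :=
  stmt5_general φ hsupp hsmooth hA1 g hg1 hg2 hg3 B hB K
end

section
/- Let φ: ℝ → ℝ be compactly supported, twice continuously differentiable, and satisfy Σ_{j∈ℤ} j^m φ(t − j) = t^m for all t ∈ ℝ and m = 0, 1, 2. Define ψ(q, s) := Σ_{j∈ℤ} max(j − q + s, 0) · φ''(q − j). Let Q be a real symmetric positive definite 2×2 matrix. Then for every h ∈ ℝ, (1 / (2π √(det Q))) ∫_{ℝ²} ∫_0^1 ψ( t, h + (1/2) ⟨Q⁻¹ α, α⟩ ) dt dα = ∫_h^∞ φ(s) ds. -/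
/-!
Because `φ''` has compact support, `t ↦ ψ(t, s)` is the `1`-periodisation of
`u ↦ (s - u)₊ φ''(u)`, so `∫₀¹ ψ(t, s) dt = ∫ (s - u)₊ φ''(u) du = φ(s)` by Taylor's formula with
integral remainder. Substituting `α = Q^{1/2} β` turns `⟨Q⁻¹α, α⟩` into `|β|²` at the cost of the
factor `√(det Q)`, and in polar coordinates the area element of `ℝ²` is `π d(|β|²)`, whence
`∫_{ℝ²} φ(h + |β|²/2) dβ = 2π ∫_h^∞ φ`.
-/

open MeasureTheory Matrix

/-- ψ(q, s) := Σ_{j∈ℤ} max(j − q + s, 0) · φ''(q − j). -/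
noncomputable def psi (φ : ℝ → ℝ) (q s : ℝ) : ℝ :=
  ∑' j : ℤ, max ((j : ℝ) - q + s) 0 * deriv (deriv φ) (q - (j : ℝ))

open Set

variable {E : Type*} [NormedAddCommGroup E] [NormedSpace ℝ E]

theorem HasCompactSupport.exists_finset_forall_sub_intCast_eq_zero {M : Type*} [Zero M]
    {f : ℝ → M} (hf : HasCompactSupport f) {K : Set ℝ} (hK : IsCompact K) :
    ∃ S : Finset ℤ, ∀ j ∉ S, ∀ t ∈ K, f (t - j) = 0 := by
  have hfin : ((↑) ⁻¹' ((fun p : ℝ × ℝ => p.1 - p.2) '' K ×ˢ tsupport f) : Set ℤ).Finite :=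
    (Int.isClosedEmbedding_coe_real.isCompact_preimage
      ((hK.prod hf).image continuous_sub)).finite_of_discrete
  refine ⟨hfin.toFinset, fun j hj t ht => ?_⟩
  by_contra hne
  exact hj (hfin.mem_toFinset.mpr ⟨(t, t - j), ⟨ht, subset_tsupport f hne⟩, sub_sub_cancel t j⟩)

theorem integral_zero_one_tsum_sub_intCast {f : ℝ → E} (hf : Continuous f)
    (hfs : HasCompactSupport f) :
    ∫ t in (0 : ℝ)..1, ∑' j : ℤ, f (t - j) = ∫ x, f x := by
  obtain ⟨S, hS⟩ := hfs.exists_finset_forall_sub_intCast_eq_zero (isCompact_uIcc (a := 0) (b := 1))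
  calc ∫ t in (0 : ℝ)..1, ∑' j : ℤ, f (t - j)
      = ∫ t in (0 : ℝ)..1, ∑ j ∈ S, f (t - j) :=
        intervalIntegral.integral_congr fun t ht => tsum_eq_sum fun j hj => hS j hj t ht
    _ = ∑ j ∈ S, ∫ t in (0 : ℝ)..1, f (t - j) := intervalIntegral.integral_finsetSum fun j _ =>
        (hf.comp (continuous_sub_right _)).intervalIntegrable _ _
    _ = ∑' j : ℤ, ∫ t in (0 : ℝ)..1, f (t - j) := by
        refine (tsum_eq_sum fun j hj => ?_).symm
        rw [intervalIntegral.integral_congr (g := fun _ => 0) fun t ht => hS j hj t ht]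
        simp
    _ = ∑' j : ℤ, ∫ t in (0 : ℝ)..1, f (t + j) := by
        rw [← (Equiv.neg ℤ).tsum_eq]
        simp [sub_eq_add_neg]
    _ = ∫ x, f x :=
        (hf.integrable_of_hasCompactSupport hfs).hasSum_intervalIntegral_comp_add_int.tsum_eq

theorem integral_sub_mul_deriv_deriv {φ : ℝ → ℝ} (hφ : ContDiff ℝ 2 φ) (a s : ℝ) :
    ∫ u in a..s, (s - u) * deriv (deriv φ) u = φ s - φ a - (s - a) * deriv φ a := by
  have hφ' : ContDiff ℝ 1 (deriv φ) := hφ.iterate_deriv' 1 1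
  rw [intervalIntegral.integral_mul_deriv_eq_deriv_mul (u' := fun _ => -1)
    (fun x _ => by simpa using (hasDerivAt_id x).const_sub s)
    (fun x _ => ((hφ'.differentiable one_ne_zero) x).hasDerivAt)
    intervalIntegrable_const ((hφ'.continuous_deriv le_rfl).intervalIntegrable _ _)]
  have hftc : ∫ x in a..s, deriv φ x = φ s - φ a :=
    intervalIntegral.integral_deriv_eq_sub (fun x _ => (hφ.differentiable two_ne_zero) x)
      (hφ'.continuous.intervalIntegrable _ _)
  simp only [neg_one_mul, intervalIntegral.integral_neg, hftc, sub_self, zero_mul]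
  ring

theorem integral_max_sub_mul_deriv_deriv {φ : ℝ → ℝ} (hφ : ContDiff ℝ 2 φ)
    (hsupp : HasCompactSupport φ) (s : ℝ) :
    ∫ u, max (s - u) 0 * deriv (deriv φ) u = φ s := by
  obtain ⟨b, hb⟩ := hsupp.isCompact.bddBelow
  set a := min b s - 1
  have hlt : a < min b s := sub_one_lt _
  have hvanish {u : ℝ} (hu : u ≤ a) : u ∉ tsupport φ := fun hmem =>
    (hu.trans_lt (hlt.trans_le (min_le_left b s))).not_ge (hb hmem)
  have hφa : φ a = 0 := image_eq_zero_of_notMem_tsupport (hvanish le_rfl)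
  have hφ'a : deriv φ a = 0 :=
    image_eq_zero_of_notMem_tsupport fun h => hvanish le_rfl (tsupport_deriv_subset h)
  have hsupport : Function.support (fun u => max (s - u) 0 * deriv (deriv φ) u) ⊆ Ioc a s := by
    intro u hu
    rw [Function.mem_support] at hu
    by_contra hu'
    apply hu
    rcases not_and_or.mp hu' with hau | hsu
    · rw [image_eq_zero_of_notMem_tsupport fun h => hvanish (not_lt.mp hau)
        (tsupport_deriv_subset (tsupport_deriv_subset h)), mul_zero]
    · rw [max_eq_right (by linarith [not_le.mp hsu]), zero_mul]
  rw [← intervalIntegral.integral_eq_integral_of_support_subset hsupport,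
    intervalIntegral.integral_congr (g := fun u => (s - u) * deriv (deriv φ) u),
    integral_sub_mul_deriv_deriv hφ, hφa, hφ'a]
  · ring
  · intro u hu
    rw [uIcc_of_le (hlt.trans_le (min_le_right b s)).le] at hu
    simp only [max_eq_left (sub_nonneg.mpr hu.2)]

theorem integral_psi {φ : ℝ → ℝ} (hφ : ContDiff ℝ 2 φ) (hsupp : HasCompactSupport φ) (s : ℝ) :
    ∫ t in (0 : ℝ)..1, psi φ t s = φ s := by
  have hcont : Continuous fun u => max (s - u) 0 * deriv (deriv φ) u :=
    ((continuous_const.sub continuous_id).max continuous_const).mul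
      ((hφ.iterate_deriv' 1 1).continuous_deriv le_rfl)
  have hpsi (t : ℝ) : psi φ t s = ∑' j : ℤ, max (s - (t - j)) 0 * deriv (deriv φ) (t - j) := by
    simp only [psi, sub_sub_eq_add_sub, add_comm s, add_sub_right_comm]
  simp only [hpsi]
  rw [integral_zero_one_tsum_sub_intCast hcont hsupp.deriv.deriv.mul_left,
    integral_max_sub_mul_deriv_deriv hφ hsupp]

section QuadraticForm

variable {ι : Type*} [Fintype ι]

theorem integral_dotProduct_self_eq_integral_norm_sq (g : ℝ → E) :
    ∫ β : ι → ℝ, g (β ⬝ᵥ β) = ∫ x : EuclideanSpace ℝ ι, g (‖x‖ ^ 2) := by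
  rw [← (PiLp.volume_preserving_toLp ι).integral_comp
    (MeasurableEquiv.toLp 2 _).measurableEmbedding]
  congr 1 with x
  simp [EuclideanSpace.real_norm_sq_eq, dotProduct, ← sq]

variable [DecidableEq ι]

theorem integral_comp_mulVec (B : Matrix ι ι ℝ) (hB : B.det ≠ 0) (g : (ι → ℝ) → E) :
    ∫ β, g (B *ᵥ β) = |B.det|⁻¹ • ∫ α, g α := by
  let L := (B.toLinearEquiv' (B.invertibleOfIsUnitDet hB.isUnit)).toContinuousLinearEquiv
  have hmap : Measure.map L volume = ENNReal.ofReal |B.det⁻¹| • volume := by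
    rw [← LinearMap.det_toLin' B] at hB ⊢
    exact Measure.map_linearMap_addHaar_eq_smul_addHaar volume hB
  rw [← abs_inv, ← ENNReal.toReal_ofReal (abs_nonneg B.det⁻¹), ← integral_smul_measure, ← hmap]
  exact (L.toHomeomorph.measurableEmbedding.integral_map g).symm

open scoped MatrixOrder in
theorem Matrix.PosDef.exists_isSymm_mul_self_eq {Q : Matrix ι ι ℝ} (hQ : Q.PosDef) :
    ∃ B : Matrix ι ι ℝ, B.IsSymm ∧ B * B = Q ∧ B.det = √Q.det := by
  have hB : (CFC.sqrt Q).PosSemidef := (CFC.sqrt_nonneg Q).posSemidef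
  have hBB : CFC.sqrt Q * CFC.sqrt Q = Q := CFC.sqrt_mul_sqrt_self Q hQ.posSemidef.nonneg
  refine ⟨CFC.sqrt Q, ?_, hBB, ?_⟩
  · simpa [Matrix.IsHermitian, Matrix.IsSymm] using hB.isHermitian
  · rw [← Real.sqrt_mul_self hB.det_nonneg, ← det_mul, hBB]

theorem integral_comp_inv_mulVec_dotProduct {Q : Matrix ι ι ℝ} (hQ : Q.PosDef) (g : ℝ → E) :
    ∫ α : ι → ℝ, g (Q⁻¹ *ᵥ α ⬝ᵥ α) = √Q.det • ∫ β : ι → ℝ, g (β ⬝ᵥ β) := by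
  obtain ⟨B, hBsymm, hBB, hdet⟩ := hQ.exists_isSymm_mul_self_eq
  have hdetpos : 0 < B.det := hdet ▸ Real.sqrt_pos.mpr hQ.det_pos
  have hBQB : B * Q⁻¹ * B = 1 := by
    have hB : IsUnit B.det := hdetpos.ne'.isUnit
    rw [← hBB, Matrix.mul_inv_rev, ← mul_assoc, mul_nonsing_inv B hB, one_mul,
      nonsing_inv_mul B hB]
  have hquad (β : ι → ℝ) : Q⁻¹ *ᵥ (B *ᵥ β) ⬝ᵥ B *ᵥ β = β ⬝ᵥ β := by
    rw [dotProduct_mulVec, ← mulVec_transpose, hBsymm.eq, mulVec_mulVec, mulVec_mulVec, hBQB,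
      one_mulVec]
  have hcov := integral_comp_mulVec B hdetpos.ne' fun α => g (Q⁻¹ *ᵥ α ⬝ᵥ α)
  simp only [hquad, abs_of_pos hdetpos] at hcov
  rw [hcov, ← hdet, smul_inv_smul₀ hdetpos.ne']

end QuadraticForm

theorem integral_fin_two_dotProduct_self (g : ℝ → E) :
    ∫ β : Fin 2 → ℝ, g (β ⬝ᵥ β) = Real.pi • ∫ u in Ioi 0, g u := by
  have hpolar := integral_fun_norm_addHaar (volume : Measure (EuclideanSpace ℝ (Fin 2)))
    fun r => g (r ^ 2)
  have hsubst := integral_comp_rpow_Ioi_of_pos (g := g) (p := 2) two_pos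
  norm_num [Real.rpow_two] at hpolar hsubst
  rw [integral_dotProduct_self_eq_integral_norm_sq, hpolar, ← hsubst]
  have hball : volume.real (Metric.ball (0 : EuclideanSpace ℝ (Fin 2)) 1) = Real.pi := by
    simp [measureReal_def, Real.pi_nonneg]
  simp_rw [hball, mul_smul, integral_smul, ← ofNat_smul_eq_nsmul ℝ 2, smul_comm (2 : ℝ) Real.pi]

theorem integral_Ioi_zero_comp_add_mul (g : ℝ → E) (h : ℝ) {c : ℝ} (hc : 0 < c) :
    ∫ u in Ioi 0, g (h + c * u) = c⁻¹ • ∫ s in Ioi h, g s := by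
  have hshift := (measurePreserving_add_left volume h).setIntegral_preimage_emb
    (measurableEmbedding_addLeft h) g (Ioi h)
  rw [integral_comp_mul_left_Ioi (fun x => g (h + x)) 0 hc, mul_zero, ← hshift]
  simp

theorem stmt14_general (φ : ℝ → ℝ)
    (hsupp : HasCompactSupport φ)
    (hsmooth : ContDiff ℝ 2 φ)
    (Q : Matrix (Fin 2) (Fin 2) ℝ)
    (hQpos : Q.PosDef) :
    ∀ h : ℝ,
      (1 / (2 * Real.pi * Real.sqrt Q.det)) *
        ∫ α : Fin 2 → ℝ, ∫ t in (0:ℝ)..1,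
          psi φ t (h + (1 / 2) * (Q⁻¹.mulVec α ⬝ᵥ α)) =
      ∫ s in Set.Ioi h, φ s := by
  intro h
  simp only [integral_psi hsmooth hsupp]
  rw [integral_comp_inv_mulVec_dotProduct hQpos fun u => φ (h + 1 / 2 * u),
    integral_fin_two_dotProduct_self fun u => φ (h + 1 / 2 * u),
    integral_Ioi_zero_comp_add_mul φ h one_half_pos]
  have hdet : 0 < √Q.det := Real.sqrt_pos.mpr hQpos.det_pos
  simp only [smul_eq_mul]
  field_simp

theorem stmt14 (φ : ℝ → ℝ)
    (hsupp : HasCompactSupport φ)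
    (hsmooth : ContDiff ℝ 2 φ)
    (hA1 : ∀ m : ℕ, m ≤ 2 → ∀ t : ℝ,
      ∑' j : ℤ, (j : ℝ) ^ m * φ (t - (j : ℝ)) = t ^ m)
    (Q : Matrix (Fin 2) (Fin 2) ℝ)
    (hQsymm : Q.IsSymm) (hQpos : Q.PosDef) :
    ∀ h : ℝ,
      (1 / (2 * Real.pi * Real.sqrt Q.det)) *
        ∫ α : Fin 2 → ℝ, ∫ t in (0:ℝ)..1,
          psi φ t (h + (1 / 2) * (Q⁻¹.mulVec α ⬝ᵥ α)) =
      ∫ s in Set.Ioi h, φ s :=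
  stmt14_general φ hsupp hsmooth Q hQpos
end
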